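/- Let a, b > 0, let c₁, c₂ ≥ 0 satisfy c₁ < √(ab) and c₂ < √(ab), and let η > 0. Then there exist r_a, r_b > 0 such that a(r_a − r_a⁻¹) = η·(c₁·√(r_a r_b) − c₂/√(r_a r_b)) = η²·b(r_b − r_b⁻¹). -/

import Mathlib

/-!
Parametrize by the common value `v` of the three expressions: `r_a` and `r_b` are then the
positive roots of `a (r - r⁻¹) = v` and `η² b (r - r⁻¹) = v`, and it remains to solve
`η (c₁ s - c₂ / s) = v` for `s = √(r_a r_b)`. As `v → ∞` we have `r_a ~ v / a` and
`r_b ~ v / (η² b)`, so `η c s ~ c v / √(ab) < v`; moreover `s(-v) = s(v)⁻¹`. Hence the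
difference of the two sides changes sign on `[-v, v]` for large `v`, and the intermediate
value theorem gives a solution.
-/

open Filter Topology

/-- The positive root `r` of `r - r⁻¹ = u`. -/
noncomputable def invSubInv (u : ℝ) : ℝ := (u + √(u ^ 2 + 4)) / 2

lemma invSubInv_pos (u : ℝ) : 0 < invSubInv u := by
  have h : |u| < √(u ^ 2 + 4) := by
    rw [← Real.sqrt_sq_eq_abs]
    exact Real.sqrt_lt_sqrt (sq_nonneg u) (by linarith)
  unfold invSubInv
  linarith [neg_le_abs u]

lemma invSubInv_mul_sub (u : ℝ) : invSubInv u * (invSubInv u - u) = 1 := by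
  have h : √(u ^ 2 + 4) ^ 2 = u ^ 2 + 4 := Real.sq_sqrt (by positivity)
  unfold invSubInv
  linear_combination h / 4

lemma invSubInv_sub_inv (u : ℝ) : invSubInv u - (invSubInv u)⁻¹ = u := by
  rw [inv_eq_of_mul_eq_one_right (invSubInv_mul_sub u)]
  ring

lemma invSubInv_neg (u : ℝ) : invSubInv (-u) = (invSubInv u)⁻¹ := by
  refine (inv_eq_of_mul_eq_one_right ?_).symm
  have h := invSubInv_mul_sub u
  unfold invSubInv at h ⊢
  rw [neg_sq]
  linear_combination h

@[fun_prop]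
lemma continuous_invSubInv : Continuous invSubInv := by
  unfold invSubInv
  fun_prop

lemma le_invSubInv (u : ℝ) : u ≤ invSubInv u := by
  linarith [invSubInv_sub_inv u, inv_pos.2 (invSubInv_pos u)]

lemma invSubInv_le_add_one {u : ℝ} (hu : 0 ≤ u) : invSubInv u ≤ u + 1 := by
  have h1 : 1 ≤ invSubInv u := by
    by_contra! h
    have : 1 < (invSubInv u)⁻¹ := (one_lt_inv₀ (invSubInv_pos u)).2 h
    linarith [invSubInv_sub_inv u]
  linarith [invSubInv_sub_inv u, inv_le_one_of_one_le₀ h1]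

lemma tendsto_invSubInv_div_atTop : Tendsto (fun u => invSubInv u / u) atTop (𝓝 1) := by
  have hupper : Tendsto (fun u : ℝ => 1 + u⁻¹) atTop (𝓝 1) := by
    simpa using tendsto_inv_atTop_zero.const_add (1 : ℝ)
  refine tendsto_of_tendsto_of_tendsto_of_le_of_le' tendsto_const_nhds hupper ?_ ?_
  · filter_upwards [eventually_gt_atTop 0] with u hu
    rw [le_div_iff₀ hu, one_mul]
    exact le_invSubInv u
  · filter_upwards [eventually_gt_atTop 0] with u hu
    rw [div_le_iff₀ hu, add_mul, inv_mul_cancel₀ hu.ne', one_mul]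
    exact invSubInv_le_add_one hu.le

/-- The geometric mean `√(r_a r_b)` of the squeezing parameters `r_a, r_b` at which
`p (r_a - r_a⁻¹) = q (r_b - r_b⁻¹) = v`. -/
noncomputable def squeezeMean (p q v : ℝ) : ℝ := √(invSubInv (v / p) * invSubInv (v / q))

section squeezeMean

variable (p q : ℝ)

lemma squeezeMean_pos (v : ℝ) : 0 < squeezeMean p q v :=
  Real.sqrt_pos.2 (mul_pos (invSubInv_pos _) (invSubInv_pos _))

lemma squeezeMean_neg (v : ℝ) : squeezeMean p q (-v) = (squeezeMean p q v)⁻¹ := by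
  rw [squeezeMean, squeezeMean, neg_div, neg_div, invSubInv_neg, invSubInv_neg, ← mul_inv,
    Real.sqrt_inv]

lemma continuous_squeezeMean : Continuous (squeezeMean p q) := by
  unfold squeezeMean
  fun_prop

variable {p q}

lemma eventually_mul_squeezeMean_le (hp : 0 < p) (hq : 0 < q) {d : ℝ} (hd : d ^ 2 < p * q) :
    ∀ᶠ v in atTop, d * squeezeMean p q v ≤ v := by
  have hlim : Tendsto (fun v => d ^ 2 / (p * q) * (invSubInv (v / p) / (v / p)) *
      (invSubInv (v / q) / (v / q))) atTop (𝓝 (d ^ 2 / (p * q) * 1 * 1)) :=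
    ((tendsto_invSubInv_div_atTop.comp (tendsto_id.atTop_div_const hp)).const_mul _).mul
      (tendsto_invSubInv_div_atTop.comp (tendsto_id.atTop_div_const hq))
  have hlt : d ^ 2 / (p * q) * 1 * 1 < 1 := by
    rw [mul_one, mul_one, div_lt_one (mul_pos hp hq)]
    exact hd
  filter_upwards [hlim.eventually (gt_mem_nhds hlt), eventually_gt_atTop 0] with v hv hv0
  have hsq : (d * squeezeMean p q v) ^ 2 < v ^ 2 := by
    rw [mul_pow, squeezeMean, Real.sq_sqrt (mul_pos (invSubInv_pos _) (invSubInv_pos _)).le]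
    have : d ^ 2 / (p * q) * (invSubInv (v / p) / (v / p)) * (invSubInv (v / q) / (v / q)) =
        d ^ 2 * (invSubInv (v / p) * invSubInv (v / q)) / v ^ 2 := by
      field_simp
    rwa [this, div_lt_one (by positivity)] at hv
  exact (le_abs_self _).trans (abs_lt_of_sq_lt_sq hsq hv0.le).le

lemma exists_sub_div_squeezeMean_eq (hp : 0 < p) (hq : 0 < q) {d₁ d₂ : ℝ}
    (hd₁ : 0 ≤ d₁) (hd₂ : 0 ≤ d₂) (h₁ : d₁ ^ 2 < p * q) (h₂ : d₂ ^ 2 < p * q) :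
    ∃ v, d₁ * squeezeMean p q v - d₂ / squeezeMean p q v = v := by
  obtain ⟨v, hv₁, hv₂⟩ := ((eventually_mul_squeezeMean_le hp hq h₁).and
    (eventually_mul_squeezeMean_le hp hq h₂)).exists
  set s := squeezeMean p q v
  have hs : 0 < s := squeezeMean_pos p q v
  let f x := d₁ * squeezeMean p q x - d₂ / squeezeMean p q x - x
  have hf : Continuous f := by
    have := continuous_squeezeMean p q
    exact ((continuous_const.mul this).sub (continuous_const.div this
      fun x => (squeezeMean_pos p q x).ne')).sub continuous_id
  have hfv : f v ≤ 0 := by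
    have : 0 ≤ d₂ / s := div_nonneg hd₂ hs.le
    simp only [f]
    linarith
  have hf_neg_v : 0 ≤ f (-v) := by
    have : 0 ≤ d₁ * s⁻¹ := mul_nonneg hd₁ (inv_nonneg.2 hs.le)
    simp only [f, squeezeMean_neg, div_inv_eq_mul]
    linarith
  have hv : -v ≤ v := by
    linarith [mul_nonneg hd₁ hs.le]
  obtain ⟨x, -, hx⟩ := intermediate_value_Icc' hv hf.continuousOn ⟨hfv, hf_neg_v⟩
  exact ⟨x, sub_eq_zero.1 hx⟩

end squeezeMean

theorem normal_form_eta_exists (a b c₁ c₂ η : ℝ)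
    (ha : 0 < a) (hb : 0 < b) (hc₁ : 0 ≤ c₁) (hc₂ : 0 ≤ c₂)
    (h₁ : c₁ < Real.sqrt (a * b)) (h₂ : c₂ < Real.sqrt (a * b)) (hη : 0 < η) :
    ∃ ra rb : ℝ, 0 < ra ∧ 0 < rb ∧
      a * (ra - ra⁻¹) = η * (c₁ * Real.sqrt (ra * rb) - c₂ / Real.sqrt (ra * rb)) ∧
      η * (c₁ * Real.sqrt (ra * rb) - c₂ / Real.sqrt (ra * rb)) =
        η ^ 2 * (b * (rb - rb⁻¹)) := by
  have hq : 0 < η ^ 2 * b := by positivity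
  have hsq {c : ℝ} (hc : 0 ≤ c) (h : c < √(a * b)) : (η * c) ^ 2 < a * (η ^ 2 * b) := by
    have := (Real.lt_sqrt hc).1 h
    rw [mul_pow]
    nlinarith [sq_pos_of_pos hη]
  obtain ⟨v, hv⟩ := exists_sub_div_squeezeMean_eq ha hq (mul_nonneg hη.le hc₁)
    (mul_nonneg hη.le hc₂) (hsq hc₁ h₁) (hsq hc₂ h₂)
  have hv' : η * (c₁ * squeezeMean a (η ^ 2 * b) v - c₂ / squeezeMean a (η ^ 2 * b) v) = v := by
    linear_combination hv
  refine ⟨invSubInv (v / a), invSubInv (v / (η ^ 2 * b)), invSubInv_pos _, invSubInv_pos _,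
    ?_, ?_⟩ <;>
  rw [← squeezeMean, hv', invSubInv_sub_inv] <;>
  field_simp
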